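/- arXiv:math/0106143 — 6 statements merged into one kernel-verified Lean document; each statement's English description precedes it below -/
import Mathlib

section
/- Let X and Y be simplicial sets each equipped with a Maltsev structure, and let f : X ⟶ Y be a morphism of simplicial sets compatible with the Maltsev structures and surjective in every degree. Then for every n ≥ 1, every k with 0 ≤ k ≤ n, every family of elements x_i ∈ X_{n-1} indexed by i ∈ {0,…,n} \ {k} with matching faces (d_i x_j = d_{j-1} x_i whenever i < j, i ≠ k, j ≠ k), and every y ∈ Y_n with d_i y = f_{n-1}(x_i) for all i ≠ k, there exists x ∈ X_n with f_n(x) = y and d_i x = x_i for all i ≠ k. -/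
open CategoryTheory Simplicial SSet Opposite

universe u

/-- A Maltsev structure on a simplicial set `X`: a family of ternary operations,
one in each degree, commuting with the action of every morphism of the simplex
category and satisfying the Maltsev identities. -/
structure MaltsevStructure (X : SSet.{u}) where
  mal : ∀ s : SimplexCategoryᵒᵖ, X.obj s → X.obj s → X.obj s → X.obj s
  natural : ∀ {s t : SimplexCategoryᵒᵖ} (φ : s ⟶ t) (a b c : X.obj s),
    X.map φ (mal s a b c) = mal t (X.map φ a) (X.map φ b) (X.map φ c)
  mal_left : ∀ (s : SimplexCategoryᵒᵖ) (a b : X.obj s), mal s a a b = b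
  mal_right : ∀ (s : SimplexCategoryᵒᵖ) (a b : X.obj s), mal s a b b = a

/-- A morphism of simplicial sets is compatible with given Maltsev structures if
it commutes with the ternary operations in every degree. -/
def MaltsevCompatible {X Y : SSet.{u}} (f : X ⟶ Y)
    (mX : MaltsevStructure X) (mY : MaltsevStructure Y) : Prop :=
  ∀ (s : SimplexCategoryᵒᵖ) (a b c : X.obj s),
    f.app s (mX.mal s a b c) = mY.mal s (f.app s a) (f.app s b) (f.app s c)

/-- Transport of simplices along an equality of dimensions. -/
def castDim (X : SSet.{u}) {a b : ℕ} (h : a = b) (x : X _⦋a⦌) : X _⦋b⦌ := h ▸ x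

/-!
If `w` lies over `y` and `dᵢ sₜ = id`, then `w' = m(w, sₜ dᵢ w, sₜ xᵢ)` still lies over `y`
(its image is `m(f w, sₜ dᵢ f w, sₜ dᵢ f w) = f w`), has `dᵢ w' = m(dᵢ w, dᵢ w, xᵢ) = xᵢ`, and
keeps every face `dⱼ` with `dⱼ sₜ dᵢ w = dⱼ sₜ xᵢ`. For an already corrected face `j ∉ {t, t+1}`
this follows from the simplicial identities and the matching condition. So, starting from any
preimage of `y`, correct the faces `0, …, k-1` in increasing order (`t = i`) and then the faces
`n+1, …, k+1` in decreasing order (`t = i - 1`): the face `t + 1`, resp. `t`, that the correction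
may disturb is never one already fixed.
-/

namespace MaltsevStructure

variable {X : SSet.{u}} (mX : MaltsevStructure X) {n : ℕ}

lemma δ_mal (i : Fin (n + 2)) (a b c : X _⦋n + 1⦌) :
    X.δ i (mX.mal _ a b c) = mX.mal _ (X.δ i a) (X.δ i b) (X.δ i c) :=
  mX.natural _ a b c

def replaceFace (w : X _⦋n + 1⦌) (i : Fin (n + 2)) (t : Fin (n + 1)) (a : X _⦋n⦌) :
    X _⦋n + 1⦌ :=
  mX.mal _ w (X.σ t (X.δ i w)) (X.σ t a)

variable {w : X _⦋n + 1⦌} {i j : Fin (n + 2)} {t : Fin (n + 1)} {a : X _⦋n⦌}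

lemma δ_replaceFace_self (hit : i = t.castSucc ∨ i = t.succ) :
    X.δ i (mX.replaceFace w i t a) = a := by
  have hδσ : ∀ b : X _⦋n⦌, X.δ i (X.σ t b) = b := by
    rcases hit with rfl | rfl <;> simp
  rw [replaceFace, δ_mal, hδσ, hδσ, mX.mal_left]

lemma δ_replaceFace_of_eq (h : X.δ j (X.σ t (X.δ i w)) = X.δ j (X.σ t a)) :
    X.δ j (mX.replaceFace w i t a) = X.δ j w := by
  rw [replaceFace, δ_mal, h, mX.mal_right]

end MaltsevStructure

lemma MaltsevCompatible.app_replaceFace {X Y : SSet.{u}} {f : X ⟶ Y}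
    {mX : MaltsevStructure X} {mY : MaltsevStructure Y} (hf : MaltsevCompatible f mX mY)
    {n : ℕ} {w : X _⦋n + 1⦌} {i : Fin (n + 2)} {t : Fin (n + 1)} {a : X _⦋n⦌}
    (ha : f.app _ a = Y.δ i (f.app _ w)) :
    f.app _ (mX.replaceFace w i t a) = f.app _ w := by
  rw [MaltsevStructure.replaceFace, hf, σ_naturality_apply, σ_naturality_apply,
    δ_naturality_apply, ha, mY.mal_right]

section HornLifting

variable {X Y : SSet.{u}} (f : X ⟶ Y) {n : ℕ} {k : Fin (n + 2)}
  (x : ∀ i : Fin (n + 2), i ≠ k → X _⦋n⦌) (y : Y _⦋n + 1⦌)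

def IsLiftOn (S : Set (Fin (n + 2))) (w : X _⦋n + 1⦌) : Prop :=
  f.app _ w = y ∧ ∀ (i : Fin (n + 2)) (hik : i ≠ k), i ∈ S → X.δ i w = x i hik

variable {f x y}

lemma IsLiftOn.mono {S T : Set (Fin (n + 2))} {w : X _⦋n + 1⦌} (hw : IsLiftOn f x y S w)
    (hTS : T ⊆ S) : IsLiftOn f x y T w :=
  ⟨hw.1, fun i hik hi => hw.2 i hik (hTS hi)⟩

lemma exists_isLiftOn_empty (hsurj : Function.Surjective (f.app (op ⦋n + 1⦌))) :
    ∃ w, IsLiftOn f x y ∅ w := by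
  obtain ⟨w, hw⟩ := hsurj y
  exact ⟨w, hw, fun _ _ h => h.elim⟩

lemma IsLiftOn.replaceFace {mX : MaltsevStructure X} {mY : MaltsevStructure Y}
    (hcompat : MaltsevCompatible f mX mY) {S : Set (Fin (n + 2))} {w : X _⦋n + 1⦌}
    (hw : IsLiftOn f x y S w) {i : Fin (n + 2)} (hik : i ≠ k)
    (hy : Y.δ i y = f.app _ (x i hik)) {t : Fin (n + 1)} (hit : i = t.castSucc ∨ i = t.succ)
    (hS : ∀ j ∈ S, j ≠ k → X.δ j (X.σ t (X.δ i w)) = X.δ j (X.σ t (x i hik))) :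
    IsLiftOn f x y (insert i S) (mX.replaceFace w i t (x i hik)) := by
  refine ⟨(hcompat.app_replaceFace (by rw [hw.1, hy])).trans hw.1, fun j hjk hj => ?_⟩
  by_cases hji : j = i
  · subst hji
    exact mX.δ_replaceFace_self hit
  · have hjS : j ∈ S := hj.resolve_left hji
    rw [mX.δ_replaceFace_of_eq (hS j hjS hjk), hw.2 j hjk hjS]

end HornLifting

section FacesCompatible

variable {X : SSet.{u}} {m : ℕ} {k : Fin (m + 3)} {x : ∀ i : Fin (m + 3), i ≠ k → X _⦋m + 1⦌}

/-- The matching condition `dᵢ xⱼ = dⱼ₋₁ xᵢ` (`i < j`), reindexed by `j ↦ j + 1`. -/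
def FacesCompatible (x : ∀ i : Fin (m + 3), i ≠ k → X _⦋m + 1⦌) : Prop :=
  ∀ (i j : Fin (m + 2)) (hi : i.castSucc ≠ k) (hj : j.succ ≠ k), i ≤ j →
    X.δ i (x j.succ hj) = X.δ j (x i.castSucc hi)

lemma δ_σ_δ_eq_of_lt_castSucc (hx : FacesCompatible x) {w : X _⦋m + 2⦌} {i j : Fin (m + 3)}
    {t : Fin (m + 2)} (hik : i ≠ k) (hjk : j ≠ k) (hw : X.δ j w = x j hjk)
    (hit : i = t.castSucc ∨ i = t.succ) (hjt : j < t.castSucc) :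
    X.δ j (X.σ t (X.δ i w)) = X.δ j (X.σ t (x i hik)) := by
  obtain ⟨c, rfl⟩ : ∃ c : Fin (m + 1), c.succ = t := Fin.exists_succ_eq.mpr (by grind)
  obtain ⟨a, rfl⟩ : ∃ a : Fin (m + 2), a.castSucc = j := Fin.exists_castSucc_eq.mpr (by grind)
  obtain ⟨b, rfl⟩ : ∃ b : Fin (m + 2), b.succ = i := Fin.exists_succ_eq.mpr (by grind)
  have hac : a ≤ c.castSucc := by grind
  have hab : a ≤ b := by grind
  rw [δ_comp_σ_of_le_apply hac, δ_comp_σ_of_le_apply hac, δ_comp_δ_apply hab, hw,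
    hx a b hjk hik hab]

lemma δ_σ_δ_eq_of_succ_lt (hx : FacesCompatible x) {w : X _⦋m + 2⦌} {i j : Fin (m + 3)}
    {t : Fin (m + 2)} (hik : i ≠ k) (hjk : j ≠ k) (hw : X.δ j w = x j hjk)
    (hit : i = t.castSucc ∨ i = t.succ) (hjt : t.succ < j) :
    X.δ j (X.σ t (X.δ i w)) = X.δ j (X.σ t (x i hik)) := by
  obtain ⟨c, rfl⟩ : ∃ c : Fin (m + 1), c.castSucc = t := Fin.exists_castSucc_eq.mpr (by grind)
  obtain ⟨a, rfl⟩ : ∃ a : Fin (m + 2), a.succ = j := Fin.exists_succ_eq.mpr (by grind)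
  obtain ⟨b, rfl⟩ : ∃ b : Fin (m + 2), b.castSucc = i := Fin.exists_castSucc_eq.mpr (by grind)
  have hca : c.castSucc < a := by grind
  have hba : b ≤ a := by grind
  rw [δ_comp_σ_of_gt_apply hca, δ_comp_σ_of_gt_apply hca, ← δ_comp_δ_apply hba, hw,
    hx b a hik hjk hba]

end FacesCompatible

section HornFilling

variable {X Y : SSet.{u}} {mX : MaltsevStructure X} {mY : MaltsevStructure Y} {f : X ⟶ Y}
  {m : ℕ} {k : Fin (m + 3)} {x : ∀ i : Fin (m + 3), i ≠ k → X _⦋m + 1⦌} {y : Y _⦋m + 2⦌}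

theorem exists_isLiftOn_lt (hcompat : MaltsevCompatible f mX mY)
    (hsurj : Function.Surjective (f.app (op ⦋m + 2⦌))) (hx : FacesCompatible x)
    (hy : ∀ (i : Fin (m + 3)) (hik : i ≠ k), Y.δ i y = f.app _ (x i hik))
    (r : ℕ) (hr : r ≤ k) : ∃ w, IsLiftOn f x y {j | (j : ℕ) < r} w := by
  induction r with
  | zero =>
    obtain ⟨w, hw⟩ := exists_isLiftOn_empty (x := x) hsurj
    exact ⟨w, hw.mono fun j hj => absurd hj (Nat.not_lt_zero _)⟩
  | succ r ih =>
    obtain ⟨w, hw⟩ := ih (by omega)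
    have hik : (⟨r, by omega⟩ : Fin (m + 3)) ≠ k := by grind
    refine ⟨_, (hw.replaceFace hcompat hik (hy _ hik) (t := ⟨r, by omega⟩) (Or.inl rfl)
      fun j hj hjk => δ_σ_δ_eq_of_lt_castSucc hx hik hjk (hw.2 j hjk hj) (Or.inl rfl) hj).mono
      fun j hj => ?_⟩
    grind

theorem exists_isLiftOn_lt_or_ge (hcompat : MaltsevCompatible f mX mY)
    (hsurj : Function.Surjective (f.app (op ⦋m + 2⦌))) (hx : FacesCompatible x)
    (hy : ∀ (i : Fin (m + 3)) (hik : i ≠ k), Y.δ i y = f.app _ (x i hik))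
    (s : ℕ) (hs : s ≤ m + 2 - k) :
    ∃ w, IsLiftOn f x y {j | (j : ℕ) < k ∨ m + 3 - s ≤ j} w := by
  induction s with
  | zero =>
    obtain ⟨w, hw⟩ := exists_isLiftOn_lt hcompat hsurj hx hy k le_rfl
    exact ⟨w, hw.mono fun j hj => hj.resolve_right (by grind)⟩
  | succ s ih =>
    obtain ⟨w, hw⟩ := ih (by omega)
    have hik : (⟨m + 2 - s, by omega⟩ : Fin (m + 3)) ≠ k := by grind
    have hit : (⟨m + 2 - s, by omega⟩ : Fin (m + 3)) = Fin.succ ⟨m + 1 - s, by omega⟩ := by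
      grind
    refine ⟨_, (hw.replaceFace hcompat hik (hy _ hik) (Or.inr hit) fun j hj hjk => ?_).mono
      fun j hj => ?_⟩
    · rcases hj with hj | hj
      · exact δ_σ_δ_eq_of_lt_castSucc hx hik hjk (hw.2 j hjk (Or.inl hj)) (Or.inr hit) (by grind)
      · exact δ_σ_δ_eq_of_succ_lt hx hik hjk (hw.2 j hjk (Or.inr hj)) (Or.inr hit) (by grind)
    · grind

end HornFilling

/-- Explicit horn filling/lifting for a degreewise surjective morphism of simplicial
sets compatible with Maltsev structures: given a compatible family of `n`-dimensional
faces `x i` (`i ≠ k`) in `X` and an `(n+1)`-simplex `y` of `Y` whose faces away from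
`k` are the images of the `x i`, there is an `(n+1)`-simplex `x'` of `X` lying over
`y` with `dᵢ x' = x i` for all `i ≠ k`. -/
theorem maltsev_surjective_horn_lifting
    {X Y : SSet.{u}} (mX : MaltsevStructure X) (mY : MaltsevStructure Y)
    (f : X ⟶ Y) (hcompat : MaltsevCompatible f mX mY)
    (hsurj : ∀ s : SimplexCategoryᵒᵖ, Function.Surjective (f.app s))
    (n : ℕ) (k : Fin (n + 2)) (x : ∀ i : Fin (n + 2), i ≠ k → X _⦋n⦌)
    (hmatch : ∀ (m : ℕ) (hm : n = m + 1) (i j : Fin (n + 2))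
      (hij : (i : ℕ) < (j : ℕ)) (hik : i ≠ k) (hjk : j ≠ k),
        X.δ (n := m) ⟨(i : ℕ), by omega⟩ (castDim X hm (x j hjk)) =
          X.δ (n := m) ⟨(j : ℕ) - 1, by omega⟩ (castDim X hm (x i hik)))
    (y : Y _⦋n + 1⦌)
    (hy : ∀ (i : Fin (n + 2)) (hik : i ≠ k), Y.δ i y = f.app (op ⦋n⦌) (x i hik)) :
    ∃ x' : X _⦋n + 1⦌, f.app (op ⦋n + 1⦌) x' = y ∧
      ∀ (i : Fin (n + 2)) (hik : i ≠ k), X.δ i x' = x i hik := by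
  rcases n with _ | m
  · have hik : k.rev ≠ k := by grind
    obtain ⟨w, hw⟩ := exists_isLiftOn_empty (x := x) (y := y) (hsurj _)
    obtain ⟨hwy, hwx⟩ := hw.replaceFace hcompat hik (hy _ hik) (t := 0) (by grind) (by simp)
    exact ⟨_, hwy, fun i hik => hwx i hik (by grind)⟩
  · have hx : FacesCompatible x := fun i j hi hj hij =>
      hmatch m rfl i.castSucc j.succ (by simpa using Nat.lt_succ_of_le hij) hi hj
    obtain ⟨w, hwy, hwx⟩ :=
      exists_isLiftOn_lt_or_ge hcompat (hsurj _) hx hy (m + 2 - k) le_rfl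
    exact ⟨w, hwy, fun i hik => hwx i hik (by grind)⟩
end

section
/- Let X be a simplicial set equipped with a Maltsev structure. Then X is a Kan complex: every map Λ[n,k] ⟶ X from a horn (n ≥ 1, 0 ≤ k ≤ n) extends along the inclusion Λ[n,k] ⟶ Δ[n] to a map Δ[n] ⟶ X. -/
/-!
A Maltsev operation on `X` acts naturally on every hom-set `K ⟶ X`. Suppose `τ : Δ[n+1] ⟶ X`
already restricts to the horn on a set `S` of faces, and let `π` be a degeneracy with
`δ r ≫ π = 𝟙`. Then `m(τ, π ≫ δ r ≫ τ, π ≫ x_r)`, where `x_r` is the `r`-th face of the horn,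
restricts to the horn on `S ∪ {r}`: on face `r` it is `m(a, a, x_r) = x_r`, and on a face `j ∈ S`
its last two arguments agree, so it is `m(a, b, b) = a`, provided the idempotent `π ≫ δ r`
(which fixes every vertex but `r`) does not send `r` to `j`. Choosing `π` so that `π ≫ δ r`
sends `r` to its neighbour towards `k`, which is not yet filled, the faces `0, …, k - 1` are
filled in increasing order and `n + 1, …, k + 1` in decreasing order.
-/

open CategoryTheory Simplicial SSet Opposite

universe u

namespace SimplexCategory

theorem exists_δ_comp_comp_δ_eq_comp_δ {n : ℕ} {r j : Fin (n + 2)} {π : ⦋n + 1⦌ ⟶ ⦋n⦌}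
    (hπ : δ r ≫ π = 𝟙 _) (hj : j ≠ (π ≫ δ r).toOrderHom r) :
    ∃ g : ⦋n⦌ ⟶ ⦋n⦌, δ j ≫ π ≫ δ r = g ≫ δ j := by
  have hfix : ∀ v ≠ r, (π ≫ δ r).toOrderHom v = v := by
    intro v hv
    obtain ⟨w, rfl⟩ := Fin.exists_succAbove_eq hv
    have hw : π.toOrderHom (r.succAbove w) = w := congr_arg (fun f ↦ f.toOrderHom w) hπ
    change r.succAbove (π.toOrderHom (r.succAbove w)) = _
    rw [hw]
  refine eq_comp_δ_of_not_surjective' _ j fun x ↦ ?_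
  change (π ≫ δ r).toOrderHom (j.succAbove x) ≠ j
  by_cases hx : j.succAbove x = r
  · rwa [hx, ne_comm]
  · rw [hfix _ hx]
    exact Fin.succAbove_ne j x

lemma σ_comp_δ_castSucc_apply_self {n : ℕ} (r : Fin (n + 1)) :
    (σ r ≫ δ r.castSucc).toOrderHom r.castSucc = r.succ := by
  simp [δ, σ]

lemma σ_comp_δ_succ_apply_self {n : ℕ} (r : Fin (n + 1)) :
    (σ r ≫ δ r.succ).toOrderHom r.succ = r.castSucc := by
  simp [δ, σ]

end SimplexCategory

namespace MaltsevStructure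

section HomMal

variable {X K L : SSet.{u}} (mX : MaltsevStructure X)

def homMal (a b c : K ⟶ X) : K ⟶ X where
  app s := ↾fun x ↦ mX.mal s (a.app s x) (b.app s x) (c.app s x)
  naturality s t φ := by
    ext x
    simp [mX.natural]

lemma comp_homMal (f : L ⟶ K) (a b c : K ⟶ X) :
    f ≫ mX.homMal a b c = mX.homMal (f ≫ a) (f ≫ b) (f ≫ c) :=
  rfl

lemma homMal_self_left (a b : K ⟶ X) : mX.homMal a a b = b := by
  ext s x
  exact mX.mal_left s _ _

lemma homMal_self_right (a b : K ⟶ X) : mX.homMal a b b = a := by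
  ext s x
  exact mX.mal_right s _ _

end HomMal

variable {X : SSet.{u}} {n : ℕ} {k : Fin (n + 2)}

def IsFillerOn (σ₀ : (Λ[n + 1, k] : SSet) ⟶ X) (S : Set (Fin (n + 2))) (τ : Δ[n + 1] ⟶ X) :
    Prop :=
  ∀ j ∈ S, ∀ hj : j ≠ k, stdSimplex.δ j ≫ τ = horn.ι k j hj ≫ σ₀

lemma IsFillerOn.mono {σ₀ : (Λ[n + 1, k] : SSet) ⟶ X} {S T : Set (Fin (n + 2))}
    {τ : Δ[n + 1] ⟶ X} (hτ : IsFillerOn σ₀ S τ) (hTS : T ⊆ S) : IsFillerOn σ₀ T τ :=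
  fun j hj ↦ hτ j (hTS hj)

lemma eq_ι_comp_of_isFillerOn_univ {σ₀ : (Λ[n + 1, k] : SSet) ⟶ X} {τ : Δ[n + 1] ⟶ X}
    (hτ : IsFillerOn σ₀ Set.univ τ) : σ₀ = Λ[n + 1, k].ι ≫ τ :=
  horn.hom_ext' fun j hj ↦ by rw [horn.ι_ι_assoc, hτ j trivial hj]

lemma exists_isFillerOn_insert (mX : MaltsevStructure X) {σ₀ : (Λ[n + 1, k] : SSet) ⟶ X}
    {S : Set (Fin (n + 2))} {τ : Δ[n + 1] ⟶ X} (hτ : IsFillerOn σ₀ S τ) {r : Fin (n + 2)}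
    (hr : r ≠ k) {π : ⦋n + 1⦌ ⟶ ⦋n⦌} (hπ : SimplexCategory.δ r ≫ π = 𝟙 _)
    (hS : (π ≫ SimplexCategory.δ r).toOrderHom r ∉ S) :
    ∃ τ', IsFillerOn σ₀ (insert r S) τ' := by
  refine ⟨mX.homMal τ (SSet.stdSimplex.map π ≫ stdSimplex.δ r ≫ τ)
    (SSet.stdSimplex.map π ≫ horn.ι k r hr ≫ σ₀), ?_⟩
  rintro j (rfl | hjS) hj
  · have hsection : stdSimplex.δ j ≫ SSet.stdSimplex.map π = 𝟙 _ := by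
      rw [CosimplicialObject.δ, ← SSet.stdSimplex.map_comp, hπ]
      exact SSet.stdSimplex.map_id _
    rw [comp_homMal, reassoc_of% hsection, reassoc_of% hsection, homMal_self_left]
  · obtain ⟨g, hg⟩ := SimplexCategory.exists_δ_comp_comp_δ_eq_comp_δ hπ (j := j)
      (fun h ↦ hS (h ▸ hjS))
    have hg' : stdSimplex.δ j ≫ SSet.stdSimplex.map π ≫ stdSimplex.δ r =
        SSet.stdSimplex.map g ≫ stdSimplex.δ j := by
      simp only [CosimplicialObject.δ, ← SSet.stdSimplex.map_comp, hg]
    have hι : stdSimplex.δ j ≫ SSet.stdSimplex.map π ≫ horn.ι k r hr =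
        SSet.stdSimplex.map g ≫ horn.ι k j hj := by
      rw [← cancel_mono Λ[n + 1, k].ι]
      simpa only [Category.assoc, horn.ι_ι] using hg'
    rw [comp_homMal, reassoc_of% hg', reassoc_of% hι, hτ j hjS hj, homMal_self_right]

lemma exists_isFillerOn_insert_castSucc (mX : MaltsevStructure X)
    {σ₀ : (Λ[n + 1, k] : SSet) ⟶ X} {S : Set (Fin (n + 2))} {τ : Δ[n + 1] ⟶ X}
    (hτ : IsFillerOn σ₀ S τ) {r : Fin (n + 1)} (hr : r.castSucc ≠ k) (hS : r.succ ∉ S) :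
    ∃ τ', IsFillerOn σ₀ (insert r.castSucc S) τ' :=
  mX.exists_isFillerOn_insert hτ hr SimplexCategory.δ_comp_σ_self
    (by rwa [SimplexCategory.σ_comp_δ_castSucc_apply_self])

lemma exists_isFillerOn_insert_succ (mX : MaltsevStructure X)
    {σ₀ : (Λ[n + 1, k] : SSet) ⟶ X} {S : Set (Fin (n + 2))} {τ : Δ[n + 1] ⟶ X}
    (hτ : IsFillerOn σ₀ S τ) {r : Fin (n + 1)} (hr : r.succ ≠ k) (hS : r.castSucc ∉ S) :
    ∃ τ', IsFillerOn σ₀ (insert r.succ S) τ' :=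
  mX.exists_isFillerOn_insert hτ hr SimplexCategory.δ_comp_σ_succ
    (by rwa [SimplexCategory.σ_comp_δ_succ_apply_self])

lemma exists_isFillerOn_lt (mX : MaltsevStructure X) (σ₀ : (Λ[n + 1, k] : SSet) ⟶ X)
    (a : ℕ) (ha : a ≤ k) : ∃ τ, IsFillerOn σ₀ {j | (j : ℕ) < a} τ := by
  induction a with
  | zero => exact ⟨SSet.stdSimplex.map (SimplexCategory.σ 0) ≫
      horn.ι k (k.succAbove 0) (Fin.succAbove_ne k 0) ≫ σ₀, fun _ hj ↦ absurd hj (by simp)⟩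
  | succ a ih =>
    obtain ⟨τ, hτ⟩ := ih (by omega)
    obtain ⟨τ', hτ'⟩ := mX.exists_isFillerOn_insert_castSucc hτ (r := ⟨a, by omega⟩)
      (by simp only [ne_eq, Fin.ext_iff, Fin.val_castSucc]; omega) (by simp)
    refine ⟨τ', hτ'.mono fun j hj ↦ ?_⟩
    simp only [Set.mem_ofPred_eq, Set.mem_insert_iff, Fin.ext_iff, Fin.val_castSucc] at hj ⊢
    omega

lemma exists_isFillerOn_lt_or_gt (mX : MaltsevStructure X) (σ₀ : (Λ[n + 1, k] : SSet) ⟶ X)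
    (d : ℕ) (hd : d ≤ n + 1 - k) : ∃ τ, IsFillerOn σ₀ {j | (j : ℕ) < k ∨ n + 1 - d < j} τ := by
  induction d with
  | zero =>
    obtain ⟨τ, hτ⟩ := exists_isFillerOn_lt mX σ₀ k le_rfl
    refine ⟨τ, hτ.mono fun j hj ↦ ?_⟩
    simp only [Set.mem_ofPred_eq] at hj ⊢
    omega
  | succ d ih =>
    obtain ⟨τ, hτ⟩ := ih (by omega)
    obtain ⟨τ', hτ'⟩ := mX.exists_isFillerOn_insert_succ hτ (r := ⟨n - d, by omega⟩)
      (by simp only [ne_eq, Fin.ext_iff, Fin.val_succ]; omega)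
      (by simp only [Set.mem_ofPred_eq, Fin.val_castSucc]; omega)
    refine ⟨τ', hτ'.mono fun j hj ↦ ?_⟩
    simp only [Set.mem_ofPred_eq, Set.mem_insert_iff, Fin.ext_iff, Fin.val_succ] at hj ⊢
    omega

end MaltsevStructure

open MaltsevStructure

/-- A simplicial set equipped with a Maltsev structure is a Kan complex: every
horn `Λ[n, k] ⟶ X` (with `n ≥ 1`) extends to the standard simplex `Δ[n]`. -/
theorem maltsev_is_kan_complex {X : SSet.{u}} (mX : MaltsevStructure X) :
    ∀ (n : ℕ) (k : Fin (n + 2)) (σ₀ : (Λ[n + 1, k] : SSet) ⟶ X),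
      ∃ σ : Δ[n + 1] ⟶ X, σ₀ = Λ[n + 1, k].ι ≫ σ := by
  intro n k σ₀
  obtain ⟨τ, hτ⟩ := exists_isFillerOn_lt_or_gt mX σ₀ (n + 1 - k) le_rfl
  refine ⟨τ, eq_ι_comp_of_isFillerOn_univ fun j _ hj ↦ hτ j ?_ hj⟩
  have hjk := Fin.val_ne_of_ne hj
  simp only [Set.mem_ofPred_eq]
  omega
end

section
/- Let T be a monad on the category of types admitting a Maltsev element, and let X be a simplicial object in the Eilenberg–Moore category of T-algebras. Then the underlying simplicial set of X (obtained by composing with the forgetful functor from T-algebras to types) is a Kan complex. -/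
/-!
A Maltsev element gives every `T`-algebra a ternary operation `t` with `t a a b = b` and
`t a b b = a`, preserved by algebra morphisms, so the underlying simplicial set `Y` of `X`
carries such an operation, natural in the simplicial degree. Such a `Y` is Kan: the faces
`x_j` (`j ≠ k`) of a horn are matched one at a time. If `u` already has the faces `x_j` for
`j ∈ S` and `r` is the next face, pick a degeneracy `s_i` with `d_r s_i = 1` such that the
other index `i'` with `d_{i'} s_i = 1` is not in `S`, and replace `u` by
`t(u, s_i d_r u, s_i x_r)`. Its `r`-th face is `t(d_r u, d_r u, x_r) = x_r`; for `j ∈ S` the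
last two arguments have the same `j`-th face `y`, because `δ_j ≫ σ_i ≫ δ_r` factors through
`δ_j`, so that face stays `t(x_j, y, y) = x_j`. Matching the faces below `k` upwards and those
above `k` downwards keeps `i'` outside `S`.
-/

open CategoryTheory Simplicial SSet Opposite

/-- The map `Fin 3 → Fin 2` sending `0, 1 ↦ 0` and `2 ↦ 1`. -/
def maltsevG : Fin 3 → Fin 2 := ![0, 0, 1]

/-- The map `Fin 3 → Fin 2` sending `0 ↦ 0` and `1, 2 ↦ 1`. -/
def maltsevH : Fin 3 → Fin 2 := ![0, 1, 1]

/-- A Maltsev element for a monad `T` on types: an element `p ∈ T (Fin 3)`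
encoding a ternary operation `[a,b,c]` with `[a,a,b] = b` and `[a,b,b] = a`
on every Eilenberg–Moore `T`-algebra. -/
def IsMaltsevElement (T : Monad (Type)) (p : T.obj (Fin 3)) : Prop :=
  T.map (TypeCat.ofHom maltsevG) p = T.η.app (Fin 2) (1 : Fin 2) ∧
    T.map (TypeCat.ofHom maltsevH) p = T.η.app (Fin 2) (0 : Fin 2)

/-- The functor sending a simplicial object in `T`-algebras to its underlying
simplicial set. -/
def underlyingSSet (T : Monad (Type)) :
    CategoryTheory.SimplicialObject T.Algebra ⥤ SSet :=
  (CategoryTheory.SimplicialObject.whiskering _ _).obj (Monad.forget T)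

universe u

namespace SimplexCategory

/-- `δ r ≫ σ i` fixes every vertex outside `{i, i + 1}`, so `δ j ≫ σ i ≫ δ r` misses `j`. -/
theorem exists_δ_comp_σ_comp_δ_eq_comp_δ {n : ℕ} (i : Fin (n + 1)) {r j : Fin (n + 2)}
    (hr : r = i.castSucc ∨ r = i.succ) (hj₁ : j ≠ i.castSucc) (hj₂ : j ≠ i.succ) :
    ∃ θ : ⦋n⦌ ⟶ ⦋n⦌, δ j ≫ σ i ≫ δ r = θ ≫ δ j := by
  refine eq_comp_δ_of_not_surjective' _ _ fun x ↦ ?_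
  change r.succAbove (i.predAbove (j.succAbove x)) ≠ j
  grind [Fin.succAbove, Fin.predAbove, Fin.coe_castPred]

end SimplexCategory

namespace SSet

structure MaltsevOperation (Y : SSet.{u}) where
  op ⦃m : SimplexCategoryᵒᵖ⦄ : Y.obj m → Y.obj m → Y.obj m → Y.obj m
  op_self_left ⦃m : SimplexCategoryᵒᵖ⦄ (a b : Y.obj m) : op a a b = b
  op_self_right ⦃m : SimplexCategoryᵒᵖ⦄ (a b : Y.obj m) : op a b b = a
  map_op ⦃m m' : SimplexCategoryᵒᵖ⦄ (f : m ⟶ m') (a b c : Y.obj m) :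
    Y.map f (op a b c) = op (Y.map f a) (Y.map f b) (Y.map f c)

variable {Y : SSet.{u}} {n : ℕ} {k : Fin (n + 2)}

def horn.ExtendsOnFaces (σ₀ : (Λ[n + 1, k] : SSet) ⟶ Y) (u : Δ[n + 1] ⟶ Y)
    (S : Set (Fin (n + 2))) : Prop :=
  ∀ j (hj : j ≠ k), j ∈ S → stdSimplex.δ j ≫ u = horn.ι k j hj ≫ σ₀

theorem horn.ExtendsOnFaces.mono {σ₀ : (Λ[n + 1, k] : SSet) ⟶ Y} {u : Δ[n + 1] ⟶ Y}
    {S S' : Set (Fin (n + 2))} (hu : horn.ExtendsOnFaces σ₀ u S) (h : S' ⊆ S) :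
    horn.ExtendsOnFaces σ₀ u S' :=
  fun j hj hjS ↦ hu j hj (h hjS)

theorem horn.comp_ι_eq_comp_ι {A : SSet.{u}} {r j : Fin (n + 2)} (hr : r ≠ k) (hj : j ≠ k)
    {f g : A ⟶ Δ[n]} (h : f ≫ stdSimplex.δ r = g ≫ stdSimplex.δ j) :
    f ≫ horn.ι k r hr = g ≫ horn.ι k j hj := by
  rw [← cancel_mono (Λ[n + 1, k].ι), Category.assoc, Category.assoc, horn.ι_ι, horn.ι_ι, h]

namespace MaltsevOperation

def homOp (t : Y.MaltsevOperation) {A : SSet.{u}} (f g h : A ⟶ Y) : A ⟶ Y where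
  app m := TypeCat.ofHom fun a ↦ t.op (f.app m a) (g.app m a) (h.app m a)
  naturality m m' φ := by
    ext a
    simp [t.map_op]

@[simp]
theorem comp_homOp (t : Y.MaltsevOperation) {A B : SSet.{u}} (φ : B ⟶ A) (f g h : A ⟶ Y) :
    φ ≫ t.homOp f g h = t.homOp (φ ≫ f) (φ ≫ g) (φ ≫ h) :=
  rfl

@[simp]
theorem homOp_self_left (t : Y.MaltsevOperation) {A : SSet.{u}} (f g : A ⟶ Y) :
    t.homOp f f g = g := by
  ext m a
  exact t.op_self_left _ _

@[simp]
theorem homOp_self_right (t : Y.MaltsevOperation) {A : SSet.{u}} (f g : A ⟶ Y) :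
    t.homOp f g g = f := by
  ext m a
  exact t.op_self_right _ _

theorem exists_extendsOnFaces_insert (t : Y.MaltsevOperation) {σ₀ : (Λ[n + 1, k] : SSet) ⟶ Y}
    {u : Δ[n + 1] ⟶ Y} {S : Set (Fin (n + 2))} (hu : horn.ExtendsOnFaces σ₀ u S)
    (i : Fin (n + 1)) {r : Fin (n + 2)} (hrk : r ≠ k) (hr : r = i.castSucc ∨ r = i.succ)
    (hS : ∀ j ∈ S, j ≠ i.castSucc ∧ j ≠ i.succ) :
    ∃ u', horn.ExtendsOnFaces σ₀ u' (insert r S) := by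
  have hsection {Z : SSet.{u}} (x : Δ[n] ⟶ Z) : stdSimplex.δ r ≫ stdSimplex.σ i ≫ x = x := by
    rcases hr with rfl | rfl
    exacts [stdSimplex.δ_comp_σ_self_assoc x, stdSimplex.δ_comp_σ_succ_assoc x]
  refine ⟨t.homOp u (stdSimplex.σ i ≫ stdSimplex.δ r ≫ u)
    (stdSimplex.σ i ≫ horn.ι k r hrk ≫ σ₀), fun j hj hjS ↦ ?_⟩
  rcases hjS with rfl | hjS
  · simp only [comp_homOp, hsection, homOp_self_left]
  obtain ⟨θ, hθ⟩ :=
    SimplexCategory.exists_δ_comp_σ_comp_δ_eq_comp_δ i hr (hS j hjS).1 (hS j hjS).2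
  have hθ' : stdSimplex.δ j ≫ stdSimplex.σ i ≫ stdSimplex.δ r =
      SSet.stdSimplex.map θ ≫ stdSimplex.δ j := by
    have := congrArg SSet.stdSimplex.map hθ
    rwa [stdSimplex.map_comp, stdSimplex.map_comp, stdSimplex.map_comp] at this
  have hmid : stdSimplex.δ j ≫ stdSimplex.σ i ≫ stdSimplex.δ r ≫ u =
      SSet.stdSimplex.map θ ≫ horn.ι k j hj ≫ σ₀ := by
    rw [← hu j hj hjS]
    simpa only [Category.assoc] using hθ' =≫ u
  have hlast : stdSimplex.δ j ≫ stdSimplex.σ i ≫ horn.ι k r hrk ≫ σ₀ =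
      SSet.stdSimplex.map θ ≫ horn.ι k j hj ≫ σ₀ := by
    have := horn.comp_ι_eq_comp_ι hrk hj (f := stdSimplex.δ j ≫ stdSimplex.σ i)
      (by simpa only [Category.assoc] using hθ')
    simpa only [Category.assoc] using this =≫ σ₀
  simp only [comp_homOp, hu j hj hjS, hmid, hlast, homOp_self_right]

theorem exists_extendsOnFaces_lt (t : Y.MaltsevOperation) (σ₀ : (Λ[n + 1, k] : SSet) ⟶ Y)
    (r : Fin (n + 2)) (hr : r ≤ k) : ∃ u, horn.ExtendsOnFaces σ₀ u {j | j < r} := by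
  induction r using Fin.induction with
  | zero =>
    exact ⟨stdSimplex.σ 0 ≫ horn.ι k (k.succAbove 0) (Fin.succAbove_ne _ _) ≫ σ₀,
      fun j _ hj ↦ absurd hj (Fin.not_lt_zero j)⟩
  | succ r ih =>
    have hlt : r.castSucc < k := Fin.castSucc_lt_succ.trans_le hr
    obtain ⟨u, hu⟩ := ih hlt.le
    obtain ⟨u', hu'⟩ := t.exists_extendsOnFaces_insert hu r hlt.ne (Or.inl rfl)
      fun j hj ↦ ⟨hj.ne, (hj.trans Fin.castSucc_lt_succ).ne⟩
    refine ⟨u', hu'.mono fun j hj ↦ ?_⟩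
    simp only [Set.mem_ofPred_eq, Set.mem_insert_iff, Fin.lt_def, Fin.ext_iff,
      Fin.val_castSucc, Fin.val_succ] at hj ⊢
    omega

theorem exists_extendsOnFaces_lt_or_gt (t : Y.MaltsevOperation)
    (σ₀ : (Λ[n + 1, k] : SSet) ⟶ Y) (r : Fin (n + 2)) (hr : k ≤ r) :
    ∃ u, horn.ExtendsOnFaces σ₀ u {j | j < k ∨ r < j} := by
  induction r using Fin.reverseInduction with
  | last =>
    obtain ⟨u, hu⟩ := t.exists_extendsOnFaces_lt σ₀ k le_rfl
    exact ⟨u, hu.mono fun j hj ↦ hj.resolve_right (Fin.le_last j).not_gt⟩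
  | cast r ih =>
    have hlt : k < r.succ := hr.trans_lt Fin.castSucc_lt_succ
    obtain ⟨u, hu⟩ := ih hlt.le
    obtain ⟨u', hu'⟩ := t.exists_extendsOnFaces_insert hu r hlt.ne' (Or.inr rfl) fun j hj ↦ by
      simp only [Set.mem_ofPred_eq, Fin.lt_def, Fin.le_def, ne_eq, Fin.ext_iff,
        Fin.val_castSucc, Fin.val_succ] at hj hr ⊢
      omega
    refine ⟨u', hu'.mono fun j hj ↦ ?_⟩
    simp only [Set.mem_ofPred_eq, Set.mem_insert_iff, Fin.lt_def, Fin.ext_iff,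
      Fin.val_castSucc, Fin.val_succ] at hj ⊢
    omega

theorem exists_horn_filler (t : Y.MaltsevOperation) (σ₀ : (Λ[n + 1, k] : SSet) ⟶ Y) :
    ∃ σ : Δ[n + 1] ⟶ Y, σ₀ = Λ[n + 1, k].ι ≫ σ := by
  obtain ⟨u, hu⟩ := t.exists_extendsOnFaces_lt_or_gt σ₀ k le_rfl
  refine ⟨u, horn.hom_ext' fun j hj ↦ ?_⟩
  rw [horn.ι_ι_assoc, hu j hj (lt_or_gt_of_ne hj)]

theorem kanComplex (t : Y.MaltsevOperation) : KanComplex Y := by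
  refine KanComplex.iff.2 fun n k f hf ↦ ?_
  obtain ⟨σ, hσ⟩ := t.exists_horn_filler hf.desc
  exact ⟨σ, fun j hj ↦ by rw [← horn.ι_ι_assoc _ _ hj, ← hσ, hf.ι_desc]⟩

end MaltsevOperation

end SSet

namespace CategoryTheory.Monad

theorem map_ofHom_comp_apply {T : Monad (Type u)} {α β γ : Type u} (e : α → β) (v : β → γ)
    (q : T.obj α) :
    T.map (TypeCat.ofHom (v ∘ e)) q = T.map (TypeCat.ofHom v) (T.map (TypeCat.ofHom e) q) :=
  ConcreteCategory.congr_hom (T.map_comp (TypeCat.ofHom e) (TypeCat.ofHom v)) q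

namespace Algebra

theorem a_map_eq_of_map_eq_η {T : Monad (Type u)} (A : T.Algebra) {α β : Type u} {e : α → β}
    {q : T.obj α} {x : β} (h : T.map (TypeCat.ofHom e) q = T.η.app β x) (v : β → A.A) :
    A.a (T.map (TypeCat.ofHom (v ∘ e)) q) = v x := by
  have hη : T.map (TypeCat.ofHom v) (T.η.app β x) = T.η.app A.A (v x) :=
    (ConcreteCategory.congr_hom (T.η.naturality (TypeCat.ofHom v)) x).symm
  rw [map_ofHom_comp_apply, h, hη]
  exact ConcreteCategory.congr_hom A.unit (v x)

variable {T : Monad (Type)}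

def maltsevOp (p : T.obj (Fin 3)) (A : T.Algebra) (a b c : A.A) : A.A :=
  A.a (T.map (TypeCat.ofHom ![a, b, c]) p)

variable {p : T.obj (Fin 3)}

theorem Hom.map_maltsevOp {A B : T.Algebra} (f : A ⟶ B) (a b c : A.A) :
    f.f (maltsevOp p A a b c) = maltsevOp p B (f.f a) (f.f b) (f.f c) := by
  have : ![f.f a, f.f b, f.f c] = f.f ∘ ![a, b, c] := by ext i; fin_cases i <;> rfl
  rw [maltsevOp, maltsevOp, this, map_ofHom_comp_apply ![a, b, c] f.f]
  exact (ConcreteCategory.congr_hom f.h _).symm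

theorem maltsevOp_self_left (hp : IsMaltsevElement T p) (A : T.Algebra) (a b : A.A) :
    maltsevOp p A a a b = b := by
  have : ![a, a, b] = ![a, b] ∘ maltsevG := by ext i; fin_cases i <;> rfl
  rw [maltsevOp, this, A.a_map_eq_of_map_eq_η hp.1]
  rfl

theorem maltsevOp_self_right (hp : IsMaltsevElement T p) (A : T.Algebra) (a b : A.A) :
    maltsevOp p A a b b = a := by
  have : ![a, b, b] = ![a, b] ∘ maltsevH := by ext i; fin_cases i <;> rfl
  rw [maltsevOp, this, A.a_map_eq_of_map_eq_η hp.2]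
  rfl

end Algebra

end CategoryTheory.Monad

def IsMaltsevElement.maltsevOperation {T : Monad (Type)} {p : T.obj (Fin 3)}
    (hp : IsMaltsevElement T p) (X : SimplicialObject T.Algebra) :
    ((underlyingSSet T).obj X).MaltsevOperation where
  op m := Monad.Algebra.maltsevOp p (X.obj m)
  op_self_left m := Monad.Algebra.maltsevOp_self_left hp (X.obj m)
  op_self_right m := Monad.Algebra.maltsevOp_self_right hp (X.obj m)
  map_op _ _ f := Monad.Algebra.Hom.map_maltsevOp (X.map f)

/-- If `T` is a monad on types admitting a Maltsev element, then the underlying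
simplicial set of any simplicial object in `T`-algebras is a Kan complex. -/
theorem maltsev_monad_is_kan_complex
    (T : Monad (Type)) (p : T.obj (Fin 3)) (hp : IsMaltsevElement T p)
    (X : CategoryTheory.SimplicialObject T.Algebra) :
    ∀ (n : ℕ) (k : Fin (n + 2)) (σ₀ : (Λ[n + 1, k] : SSet) ⟶ (underlyingSSet T).obj X),
      ∃ σ : Δ[n + 1] ⟶ (underlyingSSet T).obj X,
        σ₀ = Λ[n + 1, k].ι ≫ σ := by
  have := (hp.maltsevOperation X).kanComplex
  exact fun n k σ₀ ↦ KanComplex.hornFilling σ₀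
end

section
/- Let T be a monad on the category of types such that for every simplicial object X in the Eilenberg–Moore category of T-algebras the underlying simplicial set of X is a Kan complex. Then T admits a Maltsev element, i.e. there exists p ∈ T(Fin 3) with T(g)(p) = η(1) and T(h)(p) = η(0), where g : Fin 3 → Fin 2 sends 0,1 ↦ 0 and 2 ↦ 1, h : Fin 3 → Fin 2 sends 0 ↦ 0 and 1,2 ↦ 1, and η is the unit of T. -/
/-! The horn `Λ[2, 0] ⟶ Δ[1]` sending the vertices `0, 1, 2` to `0, 1, 0` has no filler, but
composed with the unit `Δ[1] ⟶ T(Δ[1])` into the levelwise free simplicial `T`-algebra it must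
have one. That filler is an element `q ∈ T(Δ[1]₂)` whose faces `d₂ q` and `d₁ q` are `η` of the
edge `0 → 1` and `η` of the constant edge at `0`. A `2`-simplex `x₀ ≤ x₁ ≤ x₂` of `Δ[1]`
determines the pair `x₁ ≤ x₂`, and pairs `a ≤ b` in `Fin 2` are the elements of `Fin 3`, with
`maltsevG` and `maltsevH` as the two projections. Pushing `q` forward along `x ↦ (x₁, x₂)` gives
`p`: its images under `maltsevG` and `maltsevH` are those of `d₂ q` and `d₁ q` under evaluation
at the vertex `1`, i.e. `η 1` and `η 0`. -/

open CategoryTheory Simplicial SSet Opposite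

namespace SSet

lemma δ_yonedaEquiv_of_fac {Y : SSet} {n : ℕ} {i : Fin (n + 2)}
    {σ₀ : (Λ[n + 1, i] : SSet) ⟶ Y} {σ : Δ[n + 1] ⟶ Y} (h : σ₀ = Λ[n + 1, i].ι ≫ σ)
    (j : Fin (n + 2)) (hj : j ≠ i) :
    Y.δ j (yonedaEquiv σ) = yonedaEquiv (horn.ι i j hj ≫ σ₀) := by
  rw [h, horn.ι_ι_assoc]
  exact yonedaEquiv_naturality _ _

namespace horn₂₀

/-- The horn with vertices `0, 1, 2 ↦ 0, 1, 0`. -/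
noncomputable def fold : (Λ[2, 0] : SSet) ⟶ Δ[1] :=
  isPushout.desc (𝟙 _) (const (stdSimplex.obj₀Equiv.symm 0)) (by
    rw [Category.comp_id, comp_const, stdSimplex.δ_one_eq_const])

lemma ι₀₁_fold : ι₀₁ ≫ fold = 𝟙 _ :=
  isPushout.inl_desc _ _ _

lemma ι₀₂_fold : ι₀₂ ≫ fold = const (stdSimplex.obj₀Equiv.symm 0) :=
  isPushout.inr_desc _ _ _

end horn₂₀

end SSet

/-- The pair `x ≤ y` in `Fin 2`, encoded as an element of `Fin 3`. -/
def finThreeOfLE (x y : Fin 2) : Fin 3 := ⟨x + y, by omega⟩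

lemma maltsevG_finThreeOfLE : ∀ x y : Fin 2, x ≤ y → maltsevG (finThreeOfLE x y) = x := by
  decide

lemma maltsevH_finThreeOfLE : ∀ x y : Fin 2, x ≤ y → maltsevH (finThreeOfLE x y) = y := by
  decide

namespace CategoryTheory.Monad

variable (T : Monad (Type))

lemma exists_isMaltsevElement_of_le {A : Type} (q : T.obj A) (u v : A → Fin 2)
    (huv : ∀ a, u a ≤ v a) (hu : T.map (TypeCat.ofHom u) q = T.η.app (Fin 2) (1 : Fin 2))
    (hv : T.map (TypeCat.ofHom v) q = T.η.app (Fin 2) (0 : Fin 2)) :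
    ∃ p : T.obj (Fin 3), IsMaltsevElement T p := by
  let f : A ⟶ Fin 3 := TypeCat.ofHom fun a ↦ finThreeOfLE (u a) (v a)
  have hg : f ≫ TypeCat.ofHom maltsevG = TypeCat.ofHom u := by
    ext a : 3
    exact maltsevG_finThreeOfLE _ _ (huv a)
  have hh : f ≫ TypeCat.ofHom maltsevH = TypeCat.ofHom v := by
    ext a : 3
    exact maltsevH_finThreeOfLE _ _ (huv a)
  refine ⟨T.map f q, ?_, ?_⟩
  · rw [← Functor.map_comp_apply, hg, hu]
  · rw [← Functor.map_comp_apply, hh, hv]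

def freeSimplicialAlgebra (X : SSet) : SimplicialObject T.Algebra :=
  ((SimplicialObject.whiskering _ _).obj T.free).obj X

def unitToUnderlying (X : SSet) : X ⟶ (underlyingSSet T).obj (freeSimplicialAlgebra T X) :=
  Functor.whiskerLeft X T.η

lemma map_comp_δ_yonedaEquiv_of_fac {X : SSet} {n : ℕ} {i : Fin (n + 2)}
    {f : (Λ[n + 1, i] : SSet) ⟶ X}
    {σ : Δ[n + 1] ⟶ (underlyingSSet T).obj (freeSimplicialAlgebra T X)}
    (h : f ≫ unitToUnderlying T X = Λ[n + 1, i].ι ≫ σ) (j : Fin (n + 2)) (hj : j ≠ i)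
    {B : Type} (e : X _⦋n⦌ → B) :
    T.map (TypeCat.ofHom (e ∘ X.δ j)) (SSet.yonedaEquiv σ) =
      T.η.app B (e (SSet.yonedaEquiv (horn.ι i j hj ≫ f))) := by
  refine (Functor.map_comp_apply T.toFunctor (X.map (SimplexCategory.δ j).op)
    (TypeCat.ofHom e) _).trans ?_
  change T.map _ (((underlyingSSet T).obj (freeSimplicialAlgebra T X)).δ j _) = _
  rw [SSet.δ_yonedaEquiv_of_fac h j hj]
  exact (NatTrans.naturality_apply T.η (TypeCat.ofHom e) _).symm

end CategoryTheory.Monad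

/-- If the underlying simplicial set of every simplicial object in `T`-algebras
is a Kan complex, then the monad `T` admits a Maltsev element. -/
theorem kan_implies_maltsev_element
    (T : Monad (Type))
    (hkan : ∀ (X : CategoryTheory.SimplicialObject T.Algebra)
      (n : ℕ) (k : Fin (n + 2)) (σ₀ : (Λ[n + 1, k] : SSet) ⟶ (underlyingSSet T).obj X),
        ∃ σ : Δ[n + 1] ⟶ (underlyingSSet T).obj X,
          σ₀ = Λ[n + 1, k].ι ≫ σ) :
    ∃ p : T.obj (Fin 3), IsMaltsevElement T p := by
  obtain ⟨σ, hσ⟩ :=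
    hkan (T.freeSimplicialAlgebra Δ[1]) 1 0 (horn₂₀.fold ≫ T.unitToUnderlying Δ[1])
  let ev₁ : Δ[1] _⦋1⦌ → Fin 2 := fun y ↦ y 1
  refine T.exists_isMaltsevElement_of_le (yonedaEquiv σ) (ev₁ ∘ Δ[1].δ 2)
    (ev₁ ∘ Δ[1].δ 1) (fun x ↦ (stdSimplex.asOrderHom x).monotone (by decide)) ?_ ?_
  · rw [T.map_comp_δ_yonedaEquiv_of_fac hσ 2 (by decide), horn₂₀.ι₀₁_fold]
    rfl
  · rw [T.map_comp_δ_yonedaEquiv_of_fac hσ 1 (by decide), horn₂₀.ι₀₂_fold]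
    rfl
end

section
/- Let T be a monad on the category of types and let S¹_T denote the simplicial set obtained by applying the underlying endofunctor of T degreewise to the simplicial circle S¹ = Δ[1]/∂Δ[1]. Suppose S¹_T satisfies the (1,2)-th Kan condition in dimension 2: for all 1-simplices x₁, x₂ of S¹_T with d₁x₁ = d₁x₂ there exists a 2-simplex x of S¹_T with d₁x = x₁ and d₂x = x₂. Then T admits a Maltsev element, i.e. there exists p ∈ T(Fin 3) with T(g)(p) = η(1) and T(h)(p) = η(0), where g : Fin 3 → Fin 2 sends 0,1 ↦ 0 and 2 ↦ 1, h : Fin 3 → Fin 2 sends 0 ↦ 0 and 1,2 ↦ 1, and η is the unit of T. -/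
open CategoryTheory Simplicial SSet Opposite Limits

/-- The unique map `∂Δ[1] ⟶ Δ[0]`. -/
def boundaryToPoint : (∂Δ[1] : SSet) ⟶ Δ[0] where
  app m := TypeCat.ofHom fun _ => SSet.stdSimplex.const 0 0 m
  naturality _ t _ := by
    ext
    exact SSet.stdSimplex.objEquiv.injective (Subsingleton.elim _ _)

/-- The simplicial circle `S¹ = Δ[1]/∂Δ[1]`, i.e. the pushout of the boundary
inclusion `∂Δ[1] ⟶ Δ[1]` along the unique map `∂Δ[1] ⟶ Δ[0]`. -/
noncomputable def simplicialCircle : SSet :=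
  pushout ((∂Δ[1]).ι) boundaryToPoint

/-- The simplicial set obtained by applying the underlying endofunctor of the
monad `T` degreewise to the simplicial circle. -/
noncomputable def circleT (T : Monad (Type)) : SSet :=
  (simplicialCircle : SimplexCategoryᵒᵖ ⥤ Type) ⋙ T.toFunctor

/-!
The loop `σ` classifies a map `F` from `S¹` to the nerve of the multiplicative monoid `{0,1}`
with `F σ = 0`, and a labelling of the 2-simplices of that nerve by `Fin 3` turns the faces
`d₁, d₂` into `g, h`. Push a filler of the horn `(η (s₀ *), η σ)` of `S¹_T` forward along this
labelling: by naturality of `η`, `T g` and `T h` send it to `η` of the edges `F (s₀ *) = 1` and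
`F σ = 0`.
-/

namespace CategoryTheory.Monad

lemma map_η_app (T : Monad Type) {α β : Type} (f : α ⟶ β) (a : α) :
    T.map f (T.η.app α a) = T.η.app β (f a) :=
  (NatTrans.naturality_apply T.η f a).symm

lemma map_map_eq_η_of_comp_eq (T : Monad Type) {A B C D : Type} {f : A ⟶ C} {g : C ⟶ D}
    {d : A ⟶ B} {ψ : B ⟶ D} (h : f ≫ g = d ≫ ψ) {x : T.obj A} {b : B}
    (hx : T.map d x = T.η.app B b) : T.map g (T.map f x) = T.η.app D (ψ b) := by
  rw [← Functor.map_comp_apply, h, Functor.map_comp_apply, hx, map_η_app]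

end CategoryTheory.Monad

lemma isMaltsevElement_map (T : Monad Type) {A B : Type} (d₁ d₂ : A ⟶ B) (φ : A → Fin 3)
    (ψ : B → Fin 2) (hg : ∀ a, maltsevG (φ a) = ψ (d₁ a)) (hh : ∀ a, maltsevH (φ a) = ψ (d₂ a))
    {x : T.obj A} {b₁ b₂ : B} (hx₁ : T.map d₁ x = T.η.app B b₁) (hx₂ : T.map d₂ x = T.η.app B b₂)
    (hb₁ : ψ b₁ = 1) (hb₂ : ψ b₂ = 0) : IsMaltsevElement T (T.map (TypeCat.ofHom φ) x) := by
  constructor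
  · rw [T.map_map_eq_η_of_comp_eq (ψ := TypeCat.ofHom ψ) (ConcreteCategory.hom_ext _ _ hg) hx₁]
    exact congrArg _ hb₁
  · rw [T.map_map_eq_η_of_comp_eq (ψ := TypeCat.ofHom ψ) (ConcreteCategory.hom_ext _ _ hh) hx₂]
    exact congrArg _ hb₂

namespace simplicialCircle

noncomputable def base : simplicialCircle _⦋0⦌ :=
  SSet.yonedaEquiv (pushout.inr ((∂Δ[1]).ι) boundaryToPoint)

noncomputable def loop : simplicialCircle _⦋1⦌ :=
  SSet.yonedaEquiv (pushout.inl ((∂Δ[1]).ι) boundaryToPoint)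

lemma stdSimplex_δ_comp_inl (i : Fin 2) :
    stdSimplex.δ i ≫ pushout.inl ((∂Δ[1]).ι) boundaryToPoint =
      pushout.inr ((∂Δ[1]).ι) boundaryToPoint := by
  rw [← boundary.ι_ι, Category.assoc, pushout.condition, ← Category.assoc,
    stdSimplex.ext₀ (f := boundary.ι i ≫ boundaryToPoint) (g := 𝟙 _), Category.id_comp]

lemma δ_loop (i : Fin 2) : simplicialCircle.δ i loop = base :=
  (stdSimplex.yonedaEquiv_δ_comp _ i).symm.trans
    (congrArg SSet.yonedaEquiv (stdSimplex_δ_comp_inl i))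

variable {X : SSet} (τ : X _⦋1⦌) (h : X.δ 0 τ = X.δ 1 τ)

noncomputable def desc : simplicialCircle ⟶ X :=
  pushout.desc (SSet.yonedaEquiv.symm τ) (const (X.δ 0 τ)) (boundary.hom_ext fun i => by
    rw [boundary.ι_ι_assoc, stdSimplex.δ_comp_yonedaEquiv_symm, ← Category.assoc,
      stdSimplex.ext₀ (f := boundary.ι i ≫ boundaryToPoint) (g := 𝟙 _), Category.id_comp]
    fin_cases i
    · simp
    · simp [← h])

lemma desc_app_loop : (desc τ h).app _ loop = τ :=
  ((SSet.yonedaEquiv_comp _ _).symm.trans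
    (congrArg SSet.yonedaEquiv (pushout.inl_desc _ _ _))).trans (Equiv.apply_symm_apply _ _)

end simplicialCircle

namespace CategoryTheory.nerve

variable {C : Type} [Category C]

lemma σ_zero_hom (x : (nerve C) _⦋0⦌) : ((nerve C).σ 0 x).hom = 𝟙 _ :=
  ((nerve C).σ 0 x).map_id 0

lemma δ_one_hom (x : (nerve C) _⦋2⦌) :
    ((nerve C).δ 1 x).hom = ((nerve C).δ 2 x).hom ≫ ((nerve C).δ 0 x).hom :=
  ComposableArrows.map'_comp (show ComposableArrows C 2 from x) 0 1 2

instance (M : Type) [Monoid M] : Subsingleton ((nerve (SingleObj M)) _⦋0⦌) :=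
  ⟨fun _ _ => ComposableArrows.ext₀ (Subsingleton.elim _ _)⟩

end CategoryTheory.nerve

/-- Under `F`, the 2-simplices `s₁σ, s₀σ, s₁s₀*` of `S¹` go to the pairs of edges
`(0,1), (1,0), (1,1)`; labelling these `0, 1, 2` turns `d₁, d₂` into `g, h`. -/
def maltsevLabel (x : (nerve (SingleObj (Fin 2))) _⦋2⦌) : Fin 3 :=
  ![![0, 0], ![1, 2]] ((nerve _).δ 2 x).hom ((nerve _).δ 0 x).hom

lemma maltsevG_maltsevLabel (x : (nerve (SingleObj (Fin 2))) _⦋2⦌) :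
    maltsevG (maltsevLabel x) = ((nerve _).δ 1 x).hom := by
  rw [maltsevLabel, nerve.δ_one_hom, SingleObj.comp_as_mul]
  exact (by decide : ∀ a b : Fin 2, maltsevG (![![0, 0], ![1, 2]] a b) = b * a) _ _

lemma maltsevH_maltsevLabel (x : (nerve (SingleObj (Fin 2))) _⦋2⦌) :
    maltsevH (maltsevLabel x) = ((nerve _).δ 2 x).hom :=
  (by decide : ∀ a b : Fin 2, maltsevH (![![0, 0], ![1, 2]] a b) = a) _ _

open simplicialCircle in
/-- If `T` applied degreewise to the simplicial circle satisfies the `(1,2)`-th Kan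
condition in dimension `2`, then `T` admits a Maltsev element. -/
theorem circle_kan_condition_implies_maltsev
    (T : Monad (Type))
    (hfill : ∀ x₁ x₂ : (circleT T) _⦋1⦌,
      (circleT T).δ (1 : Fin 2) x₁ = (circleT T).δ (1 : Fin 2) x₂ →
        ∃ x : (circleT T) _⦋2⦌,
          (circleT T).δ (1 : Fin 3) x = x₁ ∧ (circleT T).δ (2 : Fin 3) x = x₂) :
    ∃ p : T.obj (Fin 3), IsMaltsevElement T p := by
  let F := desc (X := nerve (SingleObj (Fin 2)))
    (.mk₁ (show SingleObj.star _ ⟶ SingleObj.star _ from (0 : Fin 2))) (Subsingleton.elim _ _)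
  obtain ⟨x, hx₁, hx₂⟩ := hfill (T.η.app _ (simplicialCircle.σ 0 base)) (T.η.app _ loop) <| by
    change T.map _ _ = T.map _ _
    rw [T.map_η_app, T.map_η_app]
    exact congrArg (T.η.app _) ((δ_comp_σ_succ_apply 0 base).trans (δ_loop 1).symm)
  refine ⟨_, isMaltsevElement_map T (simplicialCircle.δ 1) (simplicialCircle.δ 2)
    (fun c => maltsevLabel (F.app _ c)) (fun c => (F.app _ c).hom) (fun c => ?_) (fun c => ?_)
    hx₁ hx₂ ?_ ?_⟩
  · exact (maltsevG_maltsevLabel _).trans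
      (congrArg ComposableArrows.hom (NatTrans.naturality_apply F _ c).symm)
  · exact (maltsevH_maltsevLabel _).trans
      (congrArg ComposableArrows.hom (NatTrans.naturality_apply F _ c).symm)
  · exact (congrArg ComposableArrows.hom (NatTrans.naturality_apply F _ base)).trans
      (nerve.σ_zero_hom _)
  · exact congrArg (fun y : (nerve (SingleObj (Fin 2))) _⦋1⦌ => (y.hom : Fin 2))
      (desc_app_loop _ _)
end

section
/- Let f : G ⟶ H be a morphism of simplicial groups (simplicial objects in the category of groups) such that f_n : G_n → H_n is surjective for every n. Then the underlying morphism of simplicial sets is a Kan fibration, i.e. it has the right lifting property with respect to every horn inclusion Λ[n,k] ⟶ Δ[n] for n ≥ 1 and 0 ≤ k ≤ n. -/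
/-!
Moore's algorithm, relative to `f`. Given a horn `x` in `G` and a compatible `y ∈ H_{n+1}`, start
from any preimage `u` of `y`. Multiplying `u` by `σ_t ((δ_j u)⁻¹ x_j)` with `j ∈ {t, t + 1}` does
not change `f u` (as `f x_j = δ_j y`), makes the `j`-th face equal to `x_j`, and, by the simplicial
identities and the compatibility of the faces of `x`, keeps every face `i < t` or `i > t + 1`
that was already correct. Correcting the faces `0, 1, …, k - 1` and then `n + 1, n, …, k + 1`
in this way yields the lift.
-/

open CategoryTheory Simplicial SSet Opposite

universe u

/-- The functor sending a simplicial group to its underlying simplicial set. -/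
def simplicialGroupToSSet :
    CategoryTheory.SimplicialObject GrpCat.{u} ⥤ SSet.{u} :=
  (CategoryTheory.SimplicialObject.whiskering _ _).obj (forget GrpCat)

namespace CategoryTheory.SimplicialObject

variable {C : Type*} [Category C] {FC : C → C → Type*} {CC : C → Type*}
  [∀ X Y, FunLike (FC X Y) (CC X) (CC Y)] [ConcreteCategory C FC] (X : SimplicialObject C)

lemma δ_δ_apply {n} {i j : Fin (n + 2)} (H : i ≤ j) (x : ToType (X _⦋n + 2⦌)) :
    X.δ i (X.δ j.succ x) = X.δ j (X.δ i.castSucc x) := by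
  simpa using ConcreteCategory.congr_hom (X.δ_comp_δ H) x

lemma δ_σ_of_le_apply {n} {i : Fin (n + 2)} {j : Fin (n + 1)} (H : i ≤ j.castSucc)
    (x : ToType (X _⦋n + 1⦌)) : X.δ i.castSucc (X.σ j.succ x) = X.σ j (X.δ i x) := by
  simpa using ConcreteCategory.congr_hom (X.δ_comp_σ_of_le H) x

lemma δ_σ_of_gt_apply {n} {i : Fin (n + 2)} {j : Fin (n + 1)} (H : j.castSucc < i)
    (x : ToType (X _⦋n + 1⦌)) : X.δ i.succ (X.σ j.castSucc x) = X.σ j (X.δ i x) := by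
  simpa using ConcreteCategory.congr_hom (X.δ_comp_σ_of_gt H) x

lemma δ_σ_self_apply {n} (i : Fin (n + 1)) (x : ToType (X _⦋n⦌)) :
    X.δ i.castSucc (X.σ i x) = x := by
  simpa using ConcreteCategory.congr_hom X.δ_comp_σ_self x

lemma δ_σ_succ_apply {n} (i : Fin (n + 1)) (x : ToType (X _⦋n⦌)) :
    X.δ i.succ (X.σ i x) = x := by
  simpa using ConcreteCategory.congr_hom X.δ_comp_σ_succ x

lemma δ_σ_of_eq_castSucc_or_eq_succ {n} {j : Fin (n + 2)} {t : Fin (n + 1)}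
    (hjt : j = t.castSucc ∨ j = t.succ) (x : ToType (X _⦋n⦌)) : X.δ j (X.σ t x) = x := by
  rcases hjt with rfl | rfl
  · exact X.δ_σ_self_apply t x
  · exact X.δ_σ_succ_apply t x

variable {X} {Y : SimplicialObject C} (f : X ⟶ Y)

lemma δ_naturality_apply {n} (i : Fin (n + 2)) (x : ToType (X _⦋n + 1⦌)) :
    f.app _ (X.δ i x) = Y.δ i (f.app _ x) := by
  simpa only [ConcreteCategory.comp_apply] using ConcreteCategory.congr_hom (δ_naturality f i) x

lemma σ_naturality_apply {n} (i : Fin (n + 1)) (x : ToType (X _⦋n⦌)) :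
    f.app _ (X.σ i x) = Y.σ i (f.app _ x) := by
  simpa only [ConcreteCategory.comp_apply] using ConcreteCategory.congr_hom (σ_naturality f i) x

end CategoryTheory.SimplicialObject

namespace SSet

lemma horn.ι_comp {X : SSet.{u}} {n : ℕ} {k : Fin (n + 2)} (x : (Λ[n + 1, k] : SSet.{u}) ⟶ X)
    (j : Fin (n + 2)) (hj : j ≠ k) :
    horn.ι k j hj ≫ x = yonedaEquiv.symm (x.app _ (horn.face k j hj)) := by
  rw [horn.ι, yonedaEquiv_symm_comp]

lemma δ_app_horn_face {X : SSet.{u}} {m : ℕ} {k : Fin (m + 3)}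
    (x : (Λ[m + 2, k] : SSet.{u}) ⟶ X) {a b : Fin (m + 2)} (hab : a ≤ b)
    (ha : a.castSucc ≠ k) (hb : b.succ ≠ k) :
    X.δ a (x.app _ (horn.face k b.succ hb)) = X.δ b (x.app _ (horn.face k a.castSucc ha)) := by
  have h := horn.IsCompatible.of_hom x a.castSucc b.succ ha hb (Fin.castSucc_lt_succ_iff.2 hab)
  simp only [Fin.pred_succ, Fin.castPred_castSucc, horn.ι_comp,
    stdSimplex.δ_comp_yonedaEquiv_symm] at h
  exact (yonedaEquiv.symm.injective h).symm

lemma hasLiftingProperty_horn_ι_of_exists_lift {X Y : SSet.{u}} (p : X ⟶ Y) {n : ℕ}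
    {k : Fin (n + 2)}
    (h : ∀ (x : (Λ[n + 1, k] : SSet.{u}) ⟶ X) (y : Y _⦋n + 1⦌),
      (∀ j (hj : j ≠ k), Y.δ j y = p.app _ (x.app _ (horn.face k j hj))) →
      ∃ g : X _⦋n + 1⦌, p.app _ g = y ∧ ∀ j (hj : j ≠ k), X.δ j g = x.app _ (horn.face k j hj)) :
    HasLiftingProperty Λ[n + 1, k].ι p where
  sq_hasLift {x b} sq := by
    obtain ⟨g, hg, hδ⟩ := h x (yonedaEquiv b) fun j hj => by
      rw [← stdSimplex.yonedaEquiv_δ_comp, ← horn.ι_ι k j hj, Category.assoc, ← sq.w,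
        ← Category.assoc, horn.ι_comp, yonedaEquiv_symm_comp, Equiv.apply_symm_apply]
    refine ⟨⟨{ l := yonedaEquiv.symm g, fac_left := ?_, fac_right := ?_ }⟩⟩
    · refine horn.hom_ext' fun j hj => ?_
      rw [horn.ι_ι_assoc, stdSimplex.δ_comp_yonedaEquiv_symm, hδ, horn.ι_comp]
    · apply yonedaEquiv.injective
      rw [yonedaEquiv_comp, Equiv.apply_symm_apply, hg]

end SSet

namespace SimplicialGroup

open SimplicialObject

variable {G H : SimplicialObject GrpCat.{u}} {n : ℕ} {k : Fin (n + 2)}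
  (x : (Λ[n + 1, k] : SSet.{u}) ⟶ simplicialGroupToSSet.obj G)

-- `x.app` lands in the underlying type of `G _⦋n⦌`; this is the same element, seen in the group.
def hornFace (j : Fin (n + 2)) (hj : j ≠ k) : G _⦋n⦌ := x.app _ (horn.face k j hj)

def faceDefect (u : G _⦋n + 1⦌) (j : Fin (n + 2)) (hj : j ≠ k) : G _⦋n⦌ :=
  (G.δ j u)⁻¹ * hornFace x j hj

def FillsFaces (S : Fin (n + 2) → Prop) (u : G _⦋n + 1⦌) : Prop :=
  ∀ i (hi : i ≠ k), S i → G.δ i u = hornFace x i hi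

section

variable {m : ℕ} {k : Fin (m + 3)} (x : (Λ[m + 2, k] : SSet.{u}) ⟶ simplicialGroupToSSet.obj G)
  {u : G _⦋m + 2⦌} {a b : Fin (m + 2)} (hab : a ≤ b) (ha : a.castSucc ≠ k) (hb : b.succ ≠ k)
include hab

lemma δ_hornFace : G.δ a (hornFace x b.succ hb) = G.δ b (hornFace x a.castSucc ha) :=
  δ_app_horn_face x hab ha hb

lemma δ_faceDefect_succ (hu : G.δ a.castSucc u = hornFace x a.castSucc ha) :
    G.δ a (faceDefect x u b.succ hb) = 1 := by
  rw [faceDefect, map_mul, map_inv, δ_δ_apply G hab, hu, δ_hornFace x hab ha hb, inv_mul_cancel]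

lemma δ_faceDefect_castSucc (hu : G.δ b.succ u = hornFace x b.succ hb) :
    G.δ b (faceDefect x u a.castSucc ha) = 1 := by
  rw [faceDefect, map_mul, map_inv, ← δ_δ_apply G hab, hu, δ_hornFace x hab ha hb, inv_mul_cancel]

end

lemma δ_σ_faceDefect {u : G _⦋n + 1⦌} {i j : Fin (n + 2)} (hi : i ≠ k) (hj : j ≠ k)
    (hu : G.δ i u = hornFace x i hi) {t : Fin (n + 1)} (hjt : j = t.castSucc ∨ j = t.succ)
    (hit : i < t.castSucc ∨ t.succ < i) :
    G.δ i (G.σ t (faceDefect x u j hj)) = 1 := by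
  cases n with
  | zero => fin_cases t; fin_cases i <;> simp at hit
  | succ m =>
    rcases hit with hlt | hgt
    · obtain ⟨a, rfl⟩ := Fin.eq_castSucc_of_ne_last (Fin.ne_last_of_lt hlt)
      obtain ⟨t, rfl⟩ := Fin.eq_succ_of_ne_zero (i := t) (by grind)
      obtain ⟨b, rfl⟩ := Fin.eq_succ_of_ne_zero (i := j) (by grind)
      rw [δ_σ_of_le_apply G (by grind), δ_faceDefect_succ x (by grind) hi hj hu, map_one]
    · obtain ⟨b, rfl⟩ := Fin.eq_succ_of_ne_zero (Fin.ne_zero_of_lt hgt)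
      obtain ⟨t, rfl⟩ := Fin.eq_castSucc_of_ne_last (x := t) (by grind)
      obtain ⟨a, rfl⟩ := Fin.eq_castSucc_of_ne_last (x := j) (by grind)
      rw [δ_σ_of_gt_apply G (by grind), δ_faceDefect_castSucc x (by grind) hj hi hu, map_one]

variable {x} (f : G ⟶ H) {y : H _⦋n + 1⦌}
  (hy : ∀ j (hj : j ≠ k), H.δ j y = f.app _ (hornFace x j hj))
include hy

lemma FillsFaces.exists_extend {S T : Fin (n + 2) → Prop} {u : G _⦋n + 1⦌}
    (hu : f.app _ u = y) (hS : FillsFaces x S u) {j : Fin (n + 2)} (hj : j ≠ k)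
    {t : Fin (n + 1)} (hjt : j = t.castSucc ∨ j = t.succ)
    (hSt : ∀ i, S i → i < t.castSucc ∨ t.succ < i) (hT : ∀ i, T i → S i ∨ i = j) :
    ∃ u', f.app _ u' = y ∧ FillsFaces x T u' := by
  refine ⟨u * G.σ t (faceDefect x u j hj), ?_, fun i hi hTi => ?_⟩
  · rw [map_mul, σ_naturality_apply f, faceDefect, map_mul, map_inv, δ_naturality_apply f, hu,
      ← hy j hj, inv_mul_cancel, map_one, mul_one]
  · rcases hT i hTi with hSi | rfl
    · rw [map_mul, δ_σ_faceDefect x hi hj (hS i hi hSi) hjt (hSt i hSi), mul_one, hS i hi hSi]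
    · rw [map_mul, G.δ_σ_of_eq_castSucc_or_eq_succ hjt, faceDefect, mul_inv_cancel_left]

theorem exists_lift_of_horn (hsurj : Function.Surjective (f.app (op ⦋n + 1⦌))) :
    ∃ g, f.app _ g = y ∧ ∀ j (hj : j ≠ k), G.δ j g = hornFace x j hj := by
  let P (a b : ℕ) : Prop := ∃ u, f.app _ u = y ∧ FillsFaces x (fun i => i < a ∨ b < i) u
  have lower : ∀ a ≤ (k : ℕ), P a (n + 1) := by
    intro a ha
    induction a with
    | zero =>
      obtain ⟨u, hu⟩ := hsurj y
      exact ⟨u, hu, fun i _ hi => by omega⟩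
    | succ a ih =>
      obtain ⟨u, hu, hfill⟩ := ih (by omega)
      exact hfill.exists_extend f hy hu (j := ⟨a, by omega⟩) (t := ⟨a, by omega⟩)
        (by grind) (Or.inl rfl) (by grind) (by grind)
  have upper : ∀ d ≤ n + 1 - k, P k (n + 1 - d) := by
    intro d hd
    induction d with
    | zero => exact lower k le_rfl
    | succ d ih =>
      obtain ⟨u, hu, hfill⟩ := ih (by omega)
      exact hfill.exists_extend f hy hu (j := ⟨n + 1 - d, by omega⟩) (t := ⟨n - d, by omega⟩)
        (by grind) (Or.inr (by grind)) (by grind) (by grind)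
  obtain ⟨g, hg, hfill⟩ := upper (n + 1 - k) le_rfl
  exact ⟨g, hg, fun j hj => hfill j hj (by grind)⟩

end SimplicialGroup

/-- A degreewise surjective morphism of simplicial groups is a Kan fibration on
underlying simplicial sets. -/
theorem simplicial_group_surjective_is_kan_fibration
    (G H : CategoryTheory.SimplicialObject GrpCat.{u}) (f : G ⟶ H)
    (hsurj : ∀ s : SimplexCategoryᵒᵖ, Function.Surjective (f.app s)) :
    ∀ (n : ℕ) (k : Fin (n + 2)),
      HasLiftingProperty (horn (n + 1) k).ι (simplicialGroupToSSet.map f) :=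
  fun _ _ => hasLiftingProperty_horn_ι_of_exists_lift _ fun _ _ hy =>
    SimplicialGroup.exists_lift_of_horn f hy (hsurj _)
end
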